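/- (Convexity of the distance function) In a geodesic space where every triangle is thin, for any point p and any geodesic path γ : [0,1] → U (parametrized proportionally to arc length), the function t ↦ dist(p, γ(t)) is convex. -/

import Mathlib

open Set

/-- `γ` is a unit-speed geodesic from `a` to `b`. -/
def IsGeodesic {X : Type*} [MetricSpace X] (γ : ℝ → X) (a b : X) : Prop :=
  γ 0 = a ∧ γ (dist a b) = b ∧
    ∀ s ∈ Icc (0:ℝ) (dist a b), ∀ t ∈ Icc (0:ℝ) (dist a b),
      dist (γ s) (γ t) = |s - t|

/-- The point of the segment `[a,b]` in the Euclidean plane at arclength `s` from `a`. -/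
noncomputable def cmpPt (a b : EuclideanSpace ℝ (Fin 2)) (s : ℝ) :
    EuclideanSpace ℝ (Fin 2) :=
  AffineMap.lineMap a b (s / dist a b)

/-- A triangle with vertices `x y z` and unit-speed geodesic sides `f : x→y`, `g : x→z`,
`h : y→z` is thin: the natural map from a Euclidean comparison triangle (matching vertices
and side lengths, each comparison side mapped isometrically to the corresponding side)
is distance non-increasing. -/
def IsThin {X : Type*} [MetricSpace X] (x y z : X) (f g h : ℝ → X) : Prop :=
  ∃ x' y' z' : EuclideanSpace ℝ (Fin 2),
    dist x' y' = dist x y ∧ dist x' z' = dist x z ∧ dist y' z' = dist y z ∧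
    (∀ s ∈ Icc (0:ℝ) (dist x y), ∀ t ∈ Icc (0:ℝ) (dist x z),
      dist (f s) (g t) ≤ dist (cmpPt x' y' s) (cmpPt x' z' t)) ∧
    (∀ s ∈ Icc (0:ℝ) (dist x y), ∀ t ∈ Icc (0:ℝ) (dist y z),
      dist (f s) (h t) ≤ dist (cmpPt x' y' s) (cmpPt y' z' t)) ∧
    (∀ s ∈ Icc (0:ℝ) (dist x z), ∀ t ∈ Icc (0:ℝ) (dist y z),
      dist (g s) (h t) ≤ dist (cmpPt x' z' s) (cmpPt y' z' t))

lemma dist_lineMap_le' {E : Type*} [NormedAddCommGroup E] [NormedSpace ℝ E]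
    (x a b : E) (r : ℝ) (h0 : 0 ≤ r) (h1 : r ≤ 1) :
    dist x (AffineMap.lineMap a b r) ≤ (1 - r) * dist x a + r * dist x b := by
  have : x - (AffineMap.lineMap a b r : E) = (1 - r) • (x - a) + r • (x - b) := by
    simp [AffineMap.lineMap_apply]
    module
  rw [dist_eq_norm, this, dist_eq_norm, dist_eq_norm]
  calc ‖(1 - r) • (x - a) + r • (x - b)‖ ≤ ‖(1 - r) • (x - a)‖ + ‖r • (x - b)‖ :=
        norm_add_le _ _
    _ = (1 - r) * ‖x - a‖ + r * ‖x - b‖ := by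
        rw [norm_smul, norm_smul, Real.norm_of_nonneg (by linarith), Real.norm_of_nonneg h0]

lemma key_lemma {U : Type*} [MetricSpace U]
    (hgeo : ∀ a b : U, ∃ γ : ℝ → U, IsGeodesic γ a b)
    (hthin : ∀ (x y z : U) (f g h : ℝ → U),
      IsGeodesic f x y → IsGeodesic g x z → IsGeodesic h y z → IsThin x y z f g h)
    (p : U) (γ : ℝ → U)
    (hγ : ∀ s ∈ Icc (0:ℝ) 1, ∀ t ∈ Icc (0:ℝ) 1,
      dist (γ s) (γ t) = |s - t| * dist (γ 0) (γ 1))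
    (s t : ℝ) (hs : s ∈ Icc (0:ℝ) 1) (ht : t ∈ Icc (0:ℝ) 1) (hst : s ≤ t)
    (l : ℝ) (hl0 : 0 ≤ l) (hl1 : l ≤ 1) :
    dist p (γ ((1 - l) * s + l * t)) ≤ (1 - l) * dist p (γ s) + l * dist p (γ t) := by
  set L := dist (γ 0) (γ 1) with hL
  set m := (1 - l) * s + l * t with hm
  have hm01 : m ∈ Icc (0:ℝ) 1 := by
    constructor <;> nlinarith [hs.1, hs.2, ht.1, ht.2]
  have hms : s ≤ m := by nlinarith
  have hmt : m ≤ t := by nlinarith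
  set D := dist (γ s) (γ t) with hD
  have hDval : D = (t - s) * L := by
    rw [hD, hγ s hs t ht, abs_of_nonpos (by linarith : s - t ≤ 0)]; ring
  rcases eq_or_lt_of_le (dist_nonneg : (0:ℝ) ≤ D) with hD0 | hDpos
  · -- degenerate: γ s = γ t = γ m
    have hsm : dist (γ s) (γ m) = 0 := by
      rw [hγ s hs m hm01]
      have hL0 : |s - t| * L = 0 := by rw [← hγ s hs t ht]; exact hD0.symm
      rcases mul_eq_zero.1 hL0 with h | h
      · have : s = t := by have := abs_eq_zero.1 h; linarith
        have : m = s := by rw [hm, this]; ring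
        simp [this]
      · simp [h]
    have hst' : dist (γ s) (γ t) = 0 := hD0.symm
    have e1 : γ m = γ s := (dist_eq_zero.1 (by rw [dist_comm]; exact hsm))
    have e2 : γ t = γ s := (dist_eq_zero.1 (by rw [dist_comm]; exact hst'))
    rw [e1, e2]; nlinarith [dist_nonneg (x := p) (y := γ s)]
  · -- nondegenerate: build the geodesic side h from γ s to γ t
    have hLpos : 0 < L := by nlinarith [hs.2, ht.1, hDval, abs_nonneg (s - t)]
    have htspos : 0 < t - s := by nlinarith
    obtain ⟨f, hf⟩ := hgeo p (γ s)
    obtain ⟨g, hg⟩ := hgeo p (γ t)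
    set h : ℝ → U := fun u => γ (s + u / L) with hh
    have hhgeo : IsGeodesic h (γ s) (γ t) := by
      refine ⟨by simp [hh], ?_, ?_⟩
      · rw [hh]; simp only
        rw [← hD, hDval]
        congr 1
        field_simp
        ring
      · intro u hu v hv
        rw [← hD, hDval] at hu hv
        have hu1 : s + u / L ∈ Icc (0:ℝ) 1 := by
          constructor
          · have := div_nonneg hu.1 hLpos.le; linarith [hs.1]
          · have : u / L ≤ t - s := (div_le_iff₀ hLpos).2 (by nlinarith [hu.2])
            linarith [ht.2]
        have hv1 : s + v / L ∈ Icc (0:ℝ) 1 := by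
          constructor
          · have := div_nonneg hv.1 hLpos.le; linarith [hs.1]
          · have : v / L ≤ t - s := (div_le_iff₀ hLpos).2 (by nlinarith [hv.2])
            linarith [ht.2]
        rw [hh]; simp only
        rw [hγ _ hu1 _ hv1]
        have : s + u / L - (s + v / L) = (u - v) / L := by ring
        rw [this, abs_div, abs_of_pos hLpos]
        field_simp
    obtain ⟨x', y', z', hxy, hxz, hyz, _, hfh, _⟩ :=
      hthin p (γ s) (γ t) f g h hf hg hhgeo
    have h0mem : (0:ℝ) ∈ Icc (0:ℝ) (dist p (γ s)) := ⟨le_refl _, dist_nonneg⟩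
    have hlD : l * D ∈ Icc (0:ℝ) (dist (γ s) (γ t)) := by
      rw [← hD]; constructor
      · positivity
      · nlinarith
    have key := hfh 0 h0mem (l * D) hlD
    have e0 : f 0 = p := hf.1
    have eh : h (l * D) = γ m := by
      rw [hh]; simp only
      congr 1
      rw [hDval, hm]
      field_simp
      ring
    have ec1 : cmpPt x' y' 0 = x' := by
      rw [cmpPt, zero_div, AffineMap.lineMap_apply_zero]
    have ec2 : cmpPt y' z' (l * D) = AffineMap.lineMap y' z' l := by
      rw [cmpPt, hyz, ← hD]
      congr 1
      field_simp
      exact mul_div_cancel_right₀ l (ne_of_gt hDpos)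
    rw [e0, eh, ec1, ec2] at key
    calc dist p (γ m) ≤ dist x' (AffineMap.lineMap y' z' l) := key
      _ ≤ (1 - l) * dist x' y' + l * dist x' z' := dist_lineMap_le' _ _ _ l hl0 hl1
      _ = (1 - l) * dist p (γ s) + l * dist p (γ t) := by rw [hxy, hxz]

/-- Convexity of the distance function: in a geodesic space where every triangle is thin,
for any point `p` and any constant-speed geodesic path `γ : [0,1] → U`, the function
`t ↦ dist p (γ t)` is convex on `[0,1]`. -/
theorem stmt_14 {U : Type*} [MetricSpace U]
    (hgeo : ∀ a b : U, ∃ γ : ℝ → U, IsGeodesic γ a b)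
    (hthin : ∀ (x y z : U) (f g h : ℝ → U),
      IsGeodesic f x y → IsGeodesic g x z → IsGeodesic h y z → IsThin x y z f g h)
    (p : U) (γ : ℝ → U)
    (hγ : ∀ s ∈ Icc (0:ℝ) 1, ∀ t ∈ Icc (0:ℝ) 1,
      dist (γ s) (γ t) = |s - t| * dist (γ 0) (γ 1)) :
    ConvexOn ℝ (Icc (0:ℝ) 1) (fun t => dist p (γ t)) := by
  refine ⟨convex_Icc 0 1, ?_⟩
  intro x hx y hy a b ha hb hab
  simp only [smul_eq_mul]
  rcases le_total x y with hxy | hyx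
  · have := key_lemma hgeo hthin p γ hγ x y hx hy hxy b hb (by linarith)
    have e : (1 - b) = a := by linarith
    rw [e] at this
    exact this
  · have := key_lemma hgeo hthin p γ hγ y x hy hx hyx a ha (by linarith)
    have e : (1 - a) = b := by linarith
    rw [e] at this
    calc dist p (γ (a * x + b * y)) = dist p (γ (b * y + a * x)) := by rw [add_comm]
      _ ≤ b * dist p (γ y) + a * dist p (γ x) := this
      _ = a * dist p (γ x) + b * dist p (γ y) := by ring
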